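/- arXiv:2512.19641 — 7 statements merged into one kernel-verified Lean document; each statement's English description precedes it below -/
import Mathlib

section
/- Let (Ω, F, P) be a probability space, let X : Ω → ℝ^d, Z : Ω → ℝ be random variables, let Y : Ω → ℝ be a random variable taking values in {0,1}, and let β₀ ∈ ℝ^d. Assume: (i) for every z ∈ ℝ, E[1_{Z≤z} | σ(X)] = E[1_{Z≤z} | σ(X^⊤β₀)] P-almost surely; and (ii) E[1_{Y=1} | σ(X,Z)] = E[1_{Y=1} | σ(X^⊤β₀)] P-almost surely. Then for every z ∈ ℝ, P-almost surely E[1_{Z≤z} | σ(X,Y)] = E[1_{Z≤z} | σ(X)] = E[1_{Z≤z} | σ(X^⊤β₀)] = E[1_{Z≤z} | σ(X^⊤β₀, Y)]. -/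
open MeasureTheory

lemma comap_comp_le {Ω β γ : Type*} [MeasurableSpace β] [mγ : MeasurableSpace γ]
    {f : Ω → β} {g : β → γ} (hg : Measurable g) :
    MeasurableSpace.comap (fun ω => g (f ω)) mγ ≤ MeasurableSpace.comap f inferInstance := by
  rw [show (fun ω => g (f ω)) = g ∘ f from rfl, ← MeasurableSpace.comap_comp]
  exact MeasurableSpace.comap_mono hg.comap_le

lemma integral_mul_condexp' {Ω : Type*} {m m0 : MeasurableSpace Ω}
    (μ : Measure Ω) [IsFiniteMeasure μ] (hm : m ≤ m0)
    {W f : Ω → ℝ} (hW : StronglyMeasurable[m] W)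
    (hf : Integrable f μ) (hWf : Integrable (fun ω => W ω * f ω) μ) :
    ∫ ω, W ω * f ω ∂μ = ∫ ω, W ω * (μ[f|m]) ω ∂μ := by
  haveI : SigmaFinite (μ.trim hm) := inferInstance
  have h2 : μ[W * f|m] =ᵐ[μ] W * μ[f|m] :=
    condExp_mul_of_stronglyMeasurable_left hW (by simpa [Pi.mul_def] using hWf) hf
  calc ∫ ω, W ω * f ω ∂μ = ∫ ω, (W * f) ω ∂μ := rfl
    _ = ∫ ω, (μ[W * f|m]) ω ∂μ := (integral_condExp hm).symm
    _ = ∫ ω, (W * μ[f|m]) ω ∂μ := integral_congr_ae h2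
    _ = ∫ ω, W ω * (μ[f|m]) ω ∂μ := rfl

lemma aux_cond {Ω : Type*} {m0 : MeasurableSpace Ω} (μ : Measure Ω) [IsProbabilityMeasure μ]
    {γ : Type*} [mγ : MeasurableSpace γ] (T : Ω → γ) (Y : Ω → ℝ)
    (hT : Measurable T) (hY : Measurable Y) (hYvals : ∀ ω, Y ω = 0 ∨ Y ω = 1)
    (f V : Ω → ℝ) (hf : Integrable f μ) (hV : Integrable V μ)
    (hVm : StronglyMeasurable[mγ.comap T] V)
    (hint : ∀ D : Set Ω, MeasurableSet[mγ.comap T] D →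
      (∫ ω in D, V ω ∂μ = ∫ ω in D, f ω ∂μ) ∧
      (∫ ω, Y ω * D.indicator (fun _ => (1:ℝ)) ω * f ω ∂μ
        = ∫ ω, Y ω * D.indicator (fun _ => (1:ℝ)) ω * V ω ∂μ)) :
    V =ᵐ[μ] μ[f| MeasurableSpace.comap (fun ω => (T ω, Y ω)) inferInstance] := by
  have hmTY : MeasurableSpace.comap (fun ω => (T ω, Y ω)) inferInstance ≤ m0 :=
    (hT.prodMk hY).comap_le
  haveI : SigmaFinite (μ.trim hmTY) := inferInstance
  have hTle : mγ.comap T ≤ MeasurableSpace.comap (fun ω => (T ω, Y ω)) inferInstance :=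
    comap_comp_le (f := fun ω => (T ω, Y ω)) (g := Prod.fst) measurable_fst
  refine ae_eq_condExp_of_forall_setIntegral_eq hmTY hf
    (fun s _ _ => hV.integrableOn) ?_ ((hVm.mono hTle).aestronglyMeasurable)
  intro s hs _
  obtain ⟨B, hB, rfl⟩ := hs
  set A : Set Ω := T ⁻¹' {p | (p, (1:ℝ)) ∈ B} with hAdef
  set C : Set Ω := T ⁻¹' {p | (p, (0:ℝ)) ∈ B} with hCdef
  have hA : MeasurableSet[mγ.comap T] A := ⟨_, measurable_prodMk_right hB, rfl⟩
  have hC : MeasurableSet[mγ.comap T] C := ⟨_, measurable_prodMk_right hB, rfl⟩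
  have hA0 : MeasurableSet A := hT (measurable_prodMk_right hB)
  have hC0 : MeasurableSet C := hT (measurable_prodMk_right hB)
  have hs0 : MeasurableSet ((fun ω => (T ω, Y ω)) ⁻¹' B) := (hT.prodMk hY) hB
  have hdec : ∀ h : Ω → ℝ, ∀ ω, ((fun ω => (T ω, Y ω)) ⁻¹' B).indicator h ω
      = Y ω * A.indicator (fun _ => (1:ℝ)) ω * h ω
        + (C.indicator (fun _ => (1:ℝ)) ω * h ω
           - Y ω * C.indicator (fun _ => (1:ℝ)) ω * h ω) := by
    intro h ω
    rcases hYvals ω with h0 | h1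
    · have hiff : (ω ∈ (fun ω => (T ω, Y ω)) ⁻¹' B) ↔ ω ∈ C := by
        simp [hCdef, Set.mem_preimage, h0]
      by_cases hc : ω ∈ C
      · rw [Set.indicator_of_mem (hiff.mpr hc) h]
        simp only [Set.indicator_of_mem hc, h0]; ring
      · rw [Set.indicator_of_notMem (fun hx => hc (hiff.mp hx)) h]
        simp only [Set.indicator_of_notMem hc, h0]; ring
    · have hiff : (ω ∈ (fun ω => (T ω, Y ω)) ⁻¹' B) ↔ ω ∈ A := by
        simp [hAdef, Set.mem_preimage, h1]
      by_cases ha : ω ∈ A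
      · rw [Set.indicator_of_mem (hiff.mpr ha) h]
        simp only [Set.indicator_of_mem ha, h1]; ring
      · rw [Set.indicator_of_notMem (fun hx => ha (hiff.mp hx)) h]
        simp only [Set.indicator_of_notMem ha, h1]; ring
  have hYb : ∀ ω, ‖Y ω‖ ≤ 1 := fun ω => by rcases hYvals ω with h | h <;> simp [h]
  have hindb : ∀ (D : Set Ω) ω, ‖D.indicator (fun _ => (1:ℝ)) ω‖ ≤ 1 := by
    intro D ω; by_cases hd : ω ∈ D <;> simp [Set.indicator_apply, hd]
  have hbddA : ∀ ω, ‖Y ω * A.indicator (fun _ => (1:ℝ)) ω‖ ≤ 1 := by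
    intro ω; rw [norm_mul]
    nlinarith [hYb ω, hindb A ω, norm_nonneg (Y ω), norm_nonneg (A.indicator (fun _ => (1:ℝ)) ω)]
  have hbddC : ∀ ω, ‖Y ω * C.indicator (fun _ => (1:ℝ)) ω‖ ≤ 1 := by
    intro ω; rw [norm_mul]
    nlinarith [hYb ω, hindb C ω, norm_nonneg (Y ω), norm_nonneg (C.indicator (fun _ => (1:ℝ)) ω)]
  have measYA : AEStronglyMeasurable (fun ω => Y ω * A.indicator (fun _ => (1:ℝ)) ω) μ :=
    (hY.mul (measurable_const.indicator hA0)).aestronglyMeasurable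
  have measYC : AEStronglyMeasurable (fun ω => Y ω * C.indicator (fun _ => (1:ℝ)) ω) μ :=
    (hY.mul (measurable_const.indicator hC0)).aestronglyMeasurable
  have measC : AEStronglyMeasurable (fun ω => C.indicator (fun _ => (1:ℝ)) ω) μ :=
    (measurable_const.indicator hC0).aestronglyMeasurable
  have intYA : ∀ {h : Ω → ℝ}, Integrable h μ →
      Integrable (fun ω => Y ω * A.indicator (fun _ => (1:ℝ)) ω * h ω) μ :=
    fun hh => hh.bdd_mul measYA (ae_of_all μ hbddA)
  have intYC : ∀ {h : Ω → ℝ}, Integrable h μ →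
      Integrable (fun ω => Y ω * C.indicator (fun _ => (1:ℝ)) ω * h ω) μ :=
    fun hh => hh.bdd_mul measYC (ae_of_all μ hbddC)
  have intC : ∀ {h : Ω → ℝ}, Integrable h μ →
      Integrable (fun ω => C.indicator (fun _ => (1:ℝ)) ω * h ω) μ :=
    fun hh => hh.bdd_mul measC (ae_of_all μ (hindb C))
  have hsplit : ∀ h : Ω → ℝ, Integrable h μ →
      ∫ ω in (fun ω => (T ω, Y ω)) ⁻¹' B, h ω ∂μ
        = ∫ ω, Y ω * A.indicator (fun _ => (1:ℝ)) ω * h ω ∂μ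
          + (∫ ω, C.indicator (fun _ => (1:ℝ)) ω * h ω ∂μ
             - ∫ ω, Y ω * C.indicator (fun _ => (1:ℝ)) ω * h ω ∂μ) := by
    intro h hh
    have intSub : Integrable (fun ω => C.indicator (fun _ => (1:ℝ)) ω * h ω
        - Y ω * C.indicator (fun _ => (1:ℝ)) ω * h ω) μ := (intC hh).sub (intYC hh)
    rw [← integral_indicator hs0, integral_congr_ae (ae_of_all μ (hdec h)),
      integral_add (intYA hh) intSub, integral_sub (intC hh) (intYC hh)]
  have hCconv : ∀ h : Ω → ℝ,
      ∫ ω, C.indicator (fun _ => (1:ℝ)) ω * h ω ∂μ = ∫ ω in C, h ω ∂μ := by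
    intro h
    rw [← integral_indicator hC0]
    refine integral_congr_ae (ae_of_all μ fun ω => ?_)
    by_cases hc : ω ∈ C <;> simp [Set.indicator_apply, hc]
  rw [hsplit V hV, hsplit f hf, ← (hint A hA).2, hCconv V, hCconv f, (hint C hC).1,
    ← (hint C hC).2]


/-- Under the single-index assumption on the conditional law of `Z` given `X`
and the single-index null hypothesis for `Y`, the conditional law of `Z` given `(X,Y)`
coincides a.s. with the conditional laws given `X`, given `X^⊤β₀`, and given `(X^⊤β₀, Y)`. -/
theorem stmt1 {Ω : Type*} [MeasurableSpace Ω] (μ : Measure Ω) [IsProbabilityMeasure μ]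
    {d : ℕ} (X : Ω → (Fin d → ℝ)) (Z : Ω → ℝ) (Y : Ω → ℝ)
    (hX : Measurable X) (hZ : Measurable Z) (hY : Measurable Y)
    (hYvals : ∀ ω, Y ω = 0 ∨ Y ω = 1) (β₀ : Fin d → ℝ)
    (hSIZ : ∀ z : ℝ,
      μ[({ω | Z ω ≤ z}).indicator (fun _ => (1 : ℝ)) |
          MeasurableSpace.comap X inferInstance]
        =ᵐ[μ]
      μ[({ω | Z ω ≤ z}).indicator (fun _ => (1 : ℝ)) |
          MeasurableSpace.comap (fun ω => ∑ i, X ω i * β₀ i) inferInstance])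
    (hnull :
      μ[({ω | Y ω = 1}).indicator (fun _ => (1 : ℝ)) |
          MeasurableSpace.comap (fun ω => (X ω, Z ω)) inferInstance]
        =ᵐ[μ]
      μ[({ω | Y ω = 1}).indicator (fun _ => (1 : ℝ)) |
          MeasurableSpace.comap (fun ω => ∑ i, X ω i * β₀ i) inferInstance]) :
    ∀ z : ℝ,
      (μ[({ω | Z ω ≤ z}).indicator (fun _ => (1 : ℝ)) |
          MeasurableSpace.comap (fun ω => (X ω, Y ω)) inferInstance]
        =ᵐ[μ]
       μ[({ω | Z ω ≤ z}).indicator (fun _ => (1 : ℝ)) |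
          MeasurableSpace.comap X inferInstance]) ∧
      (μ[({ω | Z ω ≤ z}).indicator (fun _ => (1 : ℝ)) |
          MeasurableSpace.comap X inferInstance]
        =ᵐ[μ]
       μ[({ω | Z ω ≤ z}).indicator (fun _ => (1 : ℝ)) |
          MeasurableSpace.comap (fun ω => ∑ i, X ω i * β₀ i) inferInstance]) ∧
      (μ[({ω | Z ω ≤ z}).indicator (fun _ => (1 : ℝ)) |
          MeasurableSpace.comap (fun ω => ∑ i, X ω i * β₀ i) inferInstance]
        =ᵐ[μ]
       μ[({ω | Z ω ≤ z}).indicator (fun _ => (1 : ℝ)) |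
          MeasurableSpace.comap (fun ω => (∑ i, X ω i * β₀ i, Y ω)) inferInstance]) := by
  -- setup
  have hYind : ({ω | Y ω = 1}).indicator (fun _ => (1 : ℝ)) = Y := by
    funext ω; rcases hYvals ω with h | h <;> simp [Set.indicator_apply, h]
  rw [hYind] at hnull
  intro z
  set S : Ω → ℝ := fun ω => ∑ i, X ω i * β₀ i with hSdef
  set f : Ω → ℝ := ({ω | Z ω ≤ z}).indicator (fun _ => (1 : ℝ)) with hfdef
  have hS : Measurable S :=
    Finset.univ.measurable_sum fun i _ => ((measurable_pi_apply i).comp hX).mul measurable_const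
  have hmX : (MeasurableSpace.comap X inferInstance) ≤ ‹MeasurableSpace Ω› := hX.comap_le
  have hmS : (MeasurableSpace.comap S inferInstance) ≤ ‹MeasurableSpace Ω› := hS.comap_le
  have hmXZ : (MeasurableSpace.comap (fun ω => (X ω, Z ω)) inferInstance) ≤ ‹MeasurableSpace Ω› := (hX.prodMk hZ).comap_le
  have hSX : (MeasurableSpace.comap S inferInstance) ≤ (MeasurableSpace.comap X inferInstance) :=
    comap_comp_le (f := X) (g := fun x : Fin d → ℝ => ∑ i, x i * β₀ i)
      (Finset.univ.measurable_sum fun i _ => (measurable_pi_apply i).mul measurable_const)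
  have hXXZ : (MeasurableSpace.comap X inferInstance) ≤ (MeasurableSpace.comap (fun ω => (X ω, Z ω)) inferInstance) :=
    comap_comp_le (f := fun ω => (X ω, Z ω)) (g := Prod.fst) measurable_fst
  have hSXZ : (MeasurableSpace.comap S inferInstance) ≤ (MeasurableSpace.comap (fun ω => (X ω, Z ω)) inferInstance) := hSX.trans hXXZ
  -- basic facts about f and Y
  have hsetZ : MeasurableSet {ω | Z ω ≤ z} := hZ measurableSet_Iic
  have hf : Integrable f μ := (integrable_const (1 : ℝ)).indicator hsetZ
  have hfb : ∀ ω, ‖f ω‖ ≤ 1 := by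
    intro ω; by_cases h : ω ∈ {ω | Z ω ≤ z} <;> simp [hfdef, Set.indicator_apply, h]
  have hfm : AEStronglyMeasurable f μ := hf.aestronglyMeasurable
  have hfXZ : StronglyMeasurable[(MeasurableSpace.comap (fun ω => (X ω, Z ω)) inferInstance)] f := by
    have hZle : MeasurableSpace.comap Z inferInstance ≤ (MeasurableSpace.comap (fun ω => (X ω, Z ω)) inferInstance) :=
      comap_comp_le (f := fun ω => (X ω, Z ω)) (g := Prod.snd) measurable_snd
    exact (stronglyMeasurable_const : StronglyMeasurable[MeasurableSpace.comap (fun ω => (X ω, Z ω)) inferInstance] fun _ => (1:ℝ)).indicator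
      (hZle _ ⟨Set.Iic z, measurableSet_Iic, rfl⟩)
  have hYb : ∀ ω, ‖Y ω‖ ≤ 1 := fun ω => by rcases hYvals ω with h | h <;> simp [h]
  have hYint : Integrable Y μ := by
    simpa using (integrable_const (1 : ℝ)).bdd_mul hY.aestronglyMeasurable (ae_of_all μ hYb)
  -- conditional expectations
  set U : Ω → ℝ := μ[f|(MeasurableSpace.comap S inferInstance)] with hUdef
  set V : Ω → ℝ := μ[f|(MeasurableSpace.comap X inferInstance)] with hVdef
  have hVU : V =ᵐ[μ] U := hSIZ z
  set G : Ω → ℝ := μ[Y|(MeasurableSpace.comap S inferInstance)] with hGdef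
  have hGS : StronglyMeasurable[(MeasurableSpace.comap S inferInstance)] G := stronglyMeasurable_condExp
  have hUS : StronglyMeasurable[(MeasurableSpace.comap S inferInstance)] U := stronglyMeasurable_condExp
  -- key identity
  have key : ∀ W : Ω → ℝ, StronglyMeasurable[(MeasurableSpace.comap X inferInstance)] W → (∀ ω, ‖W ω‖ ≤ 1) →
      ∫ ω, Y ω * W ω * f ω ∂μ = ∫ ω, Y ω * W ω * U ω ∂μ := by
    intro W hW hWb
    have hWm0 : AEStronglyMeasurable W μ := ((hW.mono hmX)).aestronglyMeasurable
    have hWfb : ∀ ω, ‖W ω * f ω‖ ≤ 1 := by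
      intro ω; rw [norm_mul]
      nlinarith [hWb ω, hfb ω, norm_nonneg (W ω), norm_nonneg (f ω)]
    have hWfXZ : StronglyMeasurable[(MeasurableSpace.comap (fun ω => (X ω, Z ω)) inferInstance)] (fun ω => W ω * f ω) := (hW.mono hXXZ).mul hfXZ
    have int1 : Integrable (fun ω => (W ω * f ω) * Y ω) μ :=
      hYint.bdd_mul (hWm0.mul hfm) (ae_of_all μ hWfb)
    have intWfG : Integrable (fun ω => (W ω * f ω) * G ω) μ :=
      integrable_condExp.bdd_mul (hWm0.mul hfm) (ae_of_all μ hWfb)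
    have intWGf : Integrable (fun ω => (W ω * G ω) * f ω) μ :=
      intWfG.congr (ae_of_all μ fun ω => by ring)
    have intWU : Integrable (fun ω => W ω * U ω) μ :=
      integrable_condExp.bdd_mul hWm0 (ae_of_all μ hWb)
    have intWUY : Integrable (fun ω => (W ω * U ω) * Y ω) μ := by
      have h1 : Integrable (fun ω => Y ω * (W ω * U ω)) μ :=
        intWU.bdd_mul hY.aestronglyMeasurable (ae_of_all μ hYb)
      exact h1.congr (ae_of_all μ fun ω => by ring)
    calc ∫ ω, Y ω * W ω * f ω ∂μ
        = ∫ ω, (W ω * f ω) * Y ω ∂μ := integral_congr_ae (ae_of_all μ fun ω => by ring)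
      _ = ∫ ω, (W ω * f ω) * (μ[Y|(MeasurableSpace.comap (fun ω => (X ω, Z ω)) inferInstance)]) ω ∂μ :=
          integral_mul_condexp' μ hmXZ hWfXZ hYint int1
      _ = ∫ ω, (W ω * f ω) * G ω ∂μ := by
          refine integral_congr_ae ?_
          filter_upwards [hnull] with ω h; rw [h]
      _ = ∫ ω, (W ω * G ω) * f ω ∂μ := integral_congr_ae (ae_of_all μ fun ω => by ring)
      _ = ∫ ω, (W ω * G ω) * V ω ∂μ :=
          integral_mul_condexp' μ hmX (hW.mul (hGS.mono hSX)) hf intWGf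
      _ = ∫ ω, (W ω * G ω) * U ω ∂μ := by
          refine integral_congr_ae ?_
          filter_upwards [hVU] with ω h; rw [h]
      _ = ∫ ω, (W ω * U ω) * G ω ∂μ := integral_congr_ae (ae_of_all μ fun ω => by ring)
      _ = ∫ ω, (W ω * U ω) * (μ[Y|(MeasurableSpace.comap (fun ω => (X ω, Z ω)) inferInstance)]) ω ∂μ := by
          refine integral_congr_ae ?_
          filter_upwards [hnull] with ω h; rw [h]
      _ = ∫ ω, (W ω * U ω) * Y ω ∂μ :=
          (integral_mul_condexp' μ hmXZ ((hW.mono hXXZ).mul (hUS.mono hSXZ)) hYint intWUY).symm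
      _ = ∫ ω, Y ω * W ω * U ω ∂μ := integral_congr_ae (ae_of_all μ fun ω => by ring)
  have hindb : ∀ (D : Set Ω) ω, ‖D.indicator (fun _ => (1 : ℝ)) ω‖ ≤ 1 := by
    intro D ω; by_cases hd : ω ∈ D <;> simp [Set.indicator_apply, hd]
  refine ⟨?_, hSIZ z, ?_⟩
  · -- claim 1
    refine (aux_cond μ X Y hX hY hYvals f V hf integrable_condExp stronglyMeasurable_condExp
      ?_).symm
    intro D hD
    refine ⟨setIntegral_condExp hmX hf hD, ?_⟩
    have hWsm : StronglyMeasurable[(MeasurableSpace.comap X inferInstance)] (D.indicator (fun _ => (1 : ℝ))) :=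
      (stronglyMeasurable_const : StronglyMeasurable[MeasurableSpace.comap X inferInstance] fun _ => (1:ℝ)).indicator hD
    calc ∫ ω, Y ω * D.indicator (fun _ => (1 : ℝ)) ω * f ω ∂μ
        = ∫ ω, Y ω * D.indicator (fun _ => (1 : ℝ)) ω * U ω ∂μ := key _ hWsm (hindb D)
      _ = ∫ ω, Y ω * D.indicator (fun _ => (1 : ℝ)) ω * V ω ∂μ := by
          refine integral_congr_ae ?_
          filter_upwards [hVU] with ω h; rw [h]
  · -- claim 3
    refine aux_cond μ S Y hS hY hYvals f U hf integrable_condExp stronglyMeasurable_condExp ?_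
    intro D hD
    refine ⟨setIntegral_condExp hmS hf hD, ?_⟩
    have hWsm : StronglyMeasurable[(MeasurableSpace.comap X inferInstance)] (D.indicator (fun _ => (1 : ℝ))) :=
      ((stronglyMeasurable_const : StronglyMeasurable[MeasurableSpace.comap S inferInstance] fun _ => (1:ℝ)).indicator hD).mono hSX
    exact key _ hWsm (hindb D)
end

section
/- Let Φ denote the cumulative distribution function of the standard normal distribution N(0,1) on ℝ, and let γ_{μ,τ²} denote the Gaussian measure on ℝ with mean μ and variance τ² ≥ 0. Then for all a, γ, μ ∈ ℝ and τ² ≥ 0: ∫_ℝ Φ(a + γ z) dγ_{μ,τ²}(z) = Φ((a + γμ)/√(1 + γ²τ²)). -/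
open MeasureTheory ProbabilityTheory

/-- The standard normal cumulative distribution function. -/
noncomputable def stdNormalCDF (x : ℝ) : ℝ := ((gaussianReal 0 1) (Set.Iic x)).toReal

open Real Set
open scoped NNReal ENNReal

namespace Stmt3Aux


lemma cdf_shift (c x : ℝ) :
    stdNormalCDF (x + c) = ∫ t in Set.Iic x, gaussianPDFReal 0 1 (t + c) := by
  have hmap : (gaussianReal 0 1).map (· + (-c)) = gaussianReal (-c) 1 := by
    rw [gaussianReal_map_add_const]; norm_num
  have h1 : (gaussianReal (-c) 1) (Set.Iic x) = (gaussianReal 0 1) (Set.Iic (x + c)) := by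
    rw [← hmap, Measure.map_apply (measurable_add_const _) measurableSet_Iic]
    congr 1
    ext u
    simp only [Set.mem_preimage, Set.mem_Iic]
    constructor <;> intro h <;> linarith
  have h2 : (gaussianReal (-c) 1) (Set.Iic x)
      = ENNReal.ofReal (∫ t in Set.Iic x, gaussianPDFReal (-c) 1 t) :=
    gaussianReal_apply_eq_integral _ one_ne_zero _
  have h3 : ∀ t : ℝ, gaussianPDFReal (-c) 1 t = gaussianPDFReal 0 1 (t + c) := by
    intro t; rw [gaussianPDFReal_add, zero_sub]
  rw [stdNormalCDF, ← h1, h2, ENNReal.toReal_ofReal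
    (setIntegral_nonneg measurableSet_Iic fun t _ => gaussianPDFReal_nonneg _ _ _)]
  exact setIntegral_congr_fun measurableSet_Iic fun t _ => h3 t

lemma cdf_scale {c : ℝ} (hc : 0 < c) (b x : ℝ) :
    ((gaussianReal b (NNReal.mk (c ^ 2) (sq_nonneg c))) (Set.Iic x)).toReal
      = stdNormalCDF ((x - b) / c) := by
  have h1 : (gaussianReal 0 1).map (c * ·) = gaussianReal 0 (NNReal.mk (c ^ 2) (sq_nonneg c)) := by
    rw [gaussianReal_map_const_mul]; norm_num
  have h2 : (gaussianReal 0 ((NNReal.mk (c ^ 2) (sq_nonneg c)) : ℝ≥0)).map (· + b)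
      = gaussianReal b (NNReal.mk (c ^ 2) (sq_nonneg c)) := by
    rw [gaussianReal_map_add_const]; norm_num
  rw [← h2, ← h1, Measure.map_map (measurable_add_const _) (measurable_const_mul _),
    Measure.map_apply ((measurable_add_const b).comp (measurable_const_mul c)) measurableSet_Iic]
  unfold stdNormalCDF
  congr 1
  congr 1
  ext u
  simp only [Function.comp_apply, Set.mem_preimage, Set.mem_Iic]
  rw [le_div_iff₀ hc]
  constructor <;> intro h <;> nlinarith

lemma pdf_product (γ t z m : ℝ) {v : ℝ≥0} (hv : v ≠ 0) :
    gaussianPDFReal 0 1 (t + γ * z) * gaussianPDFReal m v z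
      = gaussianPDFReal (-(γ * m)) (NNReal.mk (1 + γ ^ 2 * (v : ℝ)) (by positivity)) t
        * gaussianPDFReal ((m - t * γ * (v : ℝ)) / (1 + γ ^ 2 * (v : ℝ)))
            (v / (NNReal.mk (1 + γ ^ 2 * (v : ℝ)) (by positivity))) z := by
  have hv' : (0 : ℝ) < v := lt_of_le_of_ne v.coe_nonneg (by exact_mod_cast hv.symm)
  have hV : (0 : ℝ) < 1 + γ ^ 2 * v := by positivity
  simp only [gaussianPDFReal, NNReal.coe_mk, NNReal.coe_div, NNReal.coe_one]
  conv_lhs => rw [mul_mul_mul_comm]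
  conv_rhs => rw [mul_mul_mul_comm]
  congr 1
  · rw [← mul_inv, ← mul_inv, ← Real.sqrt_mul (by positivity), ← Real.sqrt_mul (by positivity)]
    congr 1
    field_simp
  · rw [← Real.exp_add, ← Real.exp_add]
    congr 1
    field_simp
    ring

lemma integral_pdf_shift (γ m t : ℝ) (v : ℝ≥0) :
    ∫ z, gaussianPDFReal 0 1 (t + γ * z) ∂(gaussianReal m v)
      = gaussianPDFReal (-(γ * m)) (NNReal.mk (1 + γ ^ 2 * (v : ℝ)) (by positivity)) t := by
  by_cases hv : v = 0
  · subst hv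
    rw [gaussianReal_zero_var, integral_dirac]
    have h1 : ((NNReal.mk (1 + γ ^ 2 * ((0 : ℝ≥0) : ℝ)) (by positivity)) : ℝ≥0) = 1 := by
      ext; simp
    rw [h1, gaussianPDFReal_add, zero_sub]
  · have hV0 : ((NNReal.mk (1 + γ ^ 2 * (v : ℝ)) (by positivity)) : ℝ≥0) ≠ 0 := by
      intro h
      have := congrArg (NNReal.toReal) h
      simp only [NNReal.coe_mk, NNReal.coe_zero] at this
      nlinarith [sq_nonneg γ, v.coe_nonneg]
    have hpdf : gaussianPDF m v = fun x => ((gaussianPDFReal m v x).toNNReal : ℝ≥0∞) := rfl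
    rw [gaussianReal_of_var_ne_zero _ hv, hpdf,
      integral_withDensity_eq_integral_smul
        ((measurable_gaussianPDFReal m v).real_toNNReal) _]
    have heq : ∀ z : ℝ, (gaussianPDFReal m v z).toNNReal • gaussianPDFReal 0 1 (t + γ * z)
        = gaussianPDFReal (-(γ * m)) (NNReal.mk (1 + γ ^ 2 * (v : ℝ)) (by positivity)) t
          * gaussianPDFReal ((m - t * γ * (v : ℝ)) / (1 + γ ^ 2 * (v : ℝ)))
            (v / (NNReal.mk (1 + γ ^ 2 * (v : ℝ)) (by positivity))) z := by
      intro z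
      rw [NNReal.smul_def, Real.coe_toNNReal _ (gaussianPDFReal_nonneg m v z), smul_eq_mul,
        mul_comm]
      exact pdf_product γ t z m hv
    simp_rw [heq]
    rw [integral_const_mul, integral_gaussianPDFReal_eq_one _ (div_ne_zero hv hV0), mul_one]

lemma integrable_uncurry (γ m a : ℝ) (v : ℝ≥0) :
    Integrable (Function.uncurry fun z t : ℝ => gaussianPDFReal 0 1 (t + γ * z))
      ((gaussianReal m v).prod (volume.restrict (Set.Iic a))) := by
  have hmeas : Measurable (Function.uncurry fun z t : ℝ => gaussianPDFReal 0 1 (t + γ * z)) :=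
    (measurable_gaussianPDFReal 0 1).comp (measurable_snd.add (measurable_fst.const_mul γ))
  have hrw : ∀ z : ℝ, (fun t => gaussianPDFReal 0 1 (t + γ * z))
      = fun t => gaussianPDFReal (-(γ * z)) 1 t :=
    fun z => funext fun t => by rw [gaussianPDFReal_add, zero_sub]
  rw [integrable_prod_iff hmeas.aestronglyMeasurable]
  constructor
  · refine ae_of_all _ fun z => ?_
    show Integrable (fun t => gaussianPDFReal 0 1 (t + γ * z)) _
    rw [hrw z]
    exact (integrable_gaussianPDFReal _ _).restrict
  · have hnn : ∀ z t : ℝ, (0:ℝ) ≤ gaussianPDFReal 0 1 (t + γ * z) :=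
      fun z t => gaussianPDFReal_nonneg _ _ _
    simp_rw [Function.uncurry_apply_pair, Real.norm_of_nonneg (hnn _ _)]
    refine Integrable.mono' (integrable_const 1)
      (hmeas.stronglyMeasurable.integral_prod_right').aestronglyMeasurable
      (ae_of_all _ fun z => ?_)
    have h0 : 0 ≤ ∫ t in Set.Iic a, gaussianPDFReal 0 1 (t + γ * z) :=
      integral_nonneg fun t => hnn z t
    have hint : Integrable (fun t => gaussianPDFReal 0 1 (t + γ * z)) volume := by
      rw [hrw z]; exact integrable_gaussianPDFReal _ _
    have hle : (∫ t in Set.Iic a, gaussianPDFReal 0 1 (t + γ * z))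
        ≤ ∫ t, gaussianPDFReal 0 1 (t + γ * z) := by
      exact setIntegral_le_integral hint (ae_of_all _ fun t => hnn z t)
    have hone : (∫ t, gaussianPDFReal 0 1 (t + γ * z)) = 1 := by
      rw [hrw z]; exact integral_gaussianPDFReal_eq_one _ one_ne_zero
    rw [Real.norm_of_nonneg h0]
    calc (∫ t in Set.Iic a, gaussianPDFReal 0 1 (t + γ * z)) ≤ _ := hle
      _ = 1 := hone

end Stmt3Aux

open Stmt3Aux

/-- Gaussian integral of a probit function:
`∫ Φ(a + γ z) dγ_{μ,τ²}(z) = Φ((a + γμ)/√(1 + γ²τ²))`. -/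
theorem stmt3 (a γ m : ℝ) (v : NNReal) :
    ∫ z, stdNormalCDF (a + γ * z) ∂(gaussianReal m v)
      = stdNormalCDF ((a + γ * m) / Real.sqrt (1 + γ ^ 2 * (v : ℝ))) := by
  have hV : (0:ℝ) < 1 + γ ^ 2 * (v:ℝ) := by positivity
  have hs : 0 < Real.sqrt (1 + γ ^ 2 * (v:ℝ)) := Real.sqrt_pos.mpr hV
  have hV0 : ((NNReal.mk (1 + γ ^ 2 * (v : ℝ)) (by positivity)) : ℝ≥0) ≠ 0 := by
    intro h
    have := congrArg (NNReal.toReal) h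
    simp only [NNReal.coe_mk, NNReal.coe_zero] at this
    nlinarith [sq_nonneg γ, v.coe_nonneg]
  have hVs : ((NNReal.mk ((Real.sqrt (1 + γ ^ 2 * (v:ℝ))) ^ 2) (sq_nonneg _)) : ℝ≥0)
      = ((NNReal.mk (1 + γ ^ 2 * (v:ℝ)) (by positivity)) : ℝ≥0) := by
    ext
    simp [Real.sq_sqrt hV.le]
  calc ∫ z, stdNormalCDF (a + γ * z) ∂(gaussianReal m v)
      = ∫ z, (∫ t in Set.Iic a, gaussianPDFReal 0 1 (t + γ * z)) ∂(gaussianReal m v) := by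
        refine integral_congr_ae (ae_of_all _ fun z => ?_)
        exact cdf_shift (γ * z) a
    _ = ∫ t in Set.Iic a, ∫ z, gaussianPDFReal 0 1 (t + γ * z) ∂(gaussianReal m v) :=
        integral_integral_swap (integrable_uncurry γ m a v)
    _ = ∫ t in Set.Iic a, gaussianPDFReal (-(γ * m)) (NNReal.mk (1 + γ ^ 2 * (v:ℝ)) (by positivity)) t :=
        setIntegral_congr_fun measurableSet_Iic fun t _ => integral_pdf_shift γ m t v
    _ = ((gaussianReal (-(γ * m)) (NNReal.mk (1 + γ ^ 2 * (v:ℝ)) (by positivity))) (Set.Iic a)).toReal := by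
        rw [gaussianReal_apply_eq_integral _ hV0, ENNReal.toReal_ofReal
          (setIntegral_nonneg measurableSet_Iic fun t _ => gaussianPDFReal_nonneg _ _ _)]
    _ = stdNormalCDF ((a - -(γ * m)) / Real.sqrt (1 + γ ^ 2 * (v:ℝ))) := by
        rw [← hVs]
        exact cdf_scale hs _ a
    _ = stdNormalCDF ((a + γ * m) / Real.sqrt (1 + γ ^ 2 * (v:ℝ))) := by
        rw [sub_neg_eq_add]
end

section
/- Let a ∈ ℝ, h > 0, c > 0, C ≥ 0 with C·h ≤ c/2, and let L : ℝ → ℝ be twice differentiable on [a, a+h] with L'(t) ≥ c and |L''(t)| ≤ C for all t ∈ [a, a+h]. Then L(a+h) > L(a), and for every x ∈ [a, a+h]: | (L(x) − L(a))/(L(a+h) − L(a)) − (x − a)/h | ≤ 3·C·h/c. -/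
/-- if `L' ≥ c > 0` and `|L''| ≤ C` on `[a, a+h]` with `C·h ≤ c/2`, then
`L(a+h) > L(a)` and the normalized increment `(L(x) − L(a))/(L(a+h) − L(a))` equals the
linear interpolant `(x − a)/h` up to an error of at most `3·C·h/c`. -/
theorem stmt6 (a h c C : ℝ) (hh : 0 < h) (hc : 0 < c) (hC : 0 ≤ C) (hCh : C * h ≤ c / 2)
    (L L' L'' : ℝ → ℝ)
    (hL : ∀ t ∈ Set.Icc a (a + h), HasDerivWithinAt L (L' t) (Set.Icc a (a + h)) t)
    (hL' : ∀ t ∈ Set.Icc a (a + h), HasDerivWithinAt L' (L'' t) (Set.Icc a (a + h)) t)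
    (hlb : ∀ t ∈ Set.Icc a (a + h), c ≤ L' t)
    (hub : ∀ t ∈ Set.Icc a (a + h), |L'' t| ≤ C) :
    L a < L (a + h) ∧
      ∀ x ∈ Set.Icc a (a + h),
        |(L x - L a) / (L (a + h) - L a) - (x - a) / h| ≤ 3 * C * h / c := by
  have haah : a ≤ a + h := by linarith
  have hamem : a ∈ Set.Icc a (a + h) := Set.left_mem_Icc.2 haah
  -- L' is C-Lipschitz from a
  have hA : ∀ t ∈ Set.Icc a (a + h), |L' t - L' a| ≤ C * (t - a) := by
    intro t ht
    have := (convex_Icc a (a + h)).norm_image_sub_le_of_norm_hasDerivWithin_le hL'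
      (fun y hy => by simpa [Real.norm_eq_abs] using hub y hy) hamem ht
    simpa [Real.norm_eq_abs, abs_of_nonneg (by linarith [ht.1] : (0:ℝ) ≤ t - a)] using this
  -- Taylor-type bound
  have hB : ∀ x ∈ Set.Icc a (a + h),
      |L x - L a - L' a * (x - a)| ≤ C * (x - a) * (x - a) := by
    intro x hx
    have hax : a ≤ x := hx.1
    have hsub : Set.Icc a x ⊆ Set.Icc a (a + h) := Set.Icc_subset_Icc le_rfl hx.2
    have hg : ∀ t ∈ Set.Icc a x,
        HasDerivWithinAt (fun t => L t - L' a * t) (L' t - L' a) (Set.Icc a x) t := by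
      intro t ht
      have h1 := ((hL t (hsub ht)).mono hsub)
      have h2 : HasDerivWithinAt (fun t => L' a * t) (L' a) (Set.Icc a x) t := by
        simpa using (hasDerivWithinAt_id t (Set.Icc a x)).const_mul (L' a)
      exact h1.sub h2
    have hbound : ∀ t ∈ Set.Icc a x, ‖L' t - L' a‖ ≤ C * (x - a) := by
      intro t ht
      have h1 := hA t (hsub ht)
      have : C * (t - a) ≤ C * (x - a) := by
        apply mul_le_mul_of_nonneg_left _ hC
        linarith [ht.2]
      simpa [Real.norm_eq_abs] using h1.trans this
    have := (convex_Icc a x).norm_image_sub_le_of_norm_hasDerivWithin_le hg hbound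
      (Set.left_mem_Icc.2 hax) (Set.right_mem_Icc.2 hax)
    have heq : (L x - L' a * x) - (L a - L' a * a) = L x - L a - L' a * (x - a) := by ring
    rw [Real.norm_eq_abs, Real.norm_eq_abs, heq,
      abs_of_nonneg (by linarith : (0:ℝ) ≤ x - a)] at this
    linarith [this]
  -- lower bound on increments via MVT
  have hcont : ContinuousOn L (Set.Icc a (a + h)) :=
    fun t ht => (hL t ht).continuousWithinAt
  have hMVT : ∀ x ∈ Set.Icc a (a + h), ∀ y ∈ Set.Icc a (a + h), x < y →
      c * (y - x) ≤ L y - L x := by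
    intro x hx y hy hxy
    have hcont' : ContinuousOn L (Set.Icc x y) :=
      hcont.mono (Set.Icc_subset_Icc hx.1 hy.2)
    have hder : ∀ t ∈ Set.Ioo x y, HasDerivAt L (L' t) t := by
      intro t ht
      have htmem : t ∈ Set.Icc a (a + h) :=
        ⟨le_of_lt (lt_of_le_of_lt hx.1 ht.1), le_of_lt (lt_of_lt_of_le ht.2 hy.2)⟩
      have hnhds : Set.Icc a (a + h) ∈ nhds t := by
        apply Icc_mem_nhds
        · exact lt_of_le_of_lt hx.1 ht.1
        · exact lt_of_lt_of_le ht.2 hy.2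
      exact (hL t htmem).hasDerivAt hnhds
    obtain ⟨ξ, hξ, hslope⟩ := exists_hasDerivAt_eq_slope L L' hxy hcont' hder
    have hξmem : ξ ∈ Set.Icc a (a + h) :=
      ⟨le_of_lt (lt_of_le_of_lt hx.1 hξ.1), le_of_lt (lt_of_lt_of_le hξ.2 hy.2)⟩
    have hcc : c ≤ (L y - L x) / (y - x) := hslope ▸ hlb ξ hξmem
    have hyx : 0 < y - x := by linarith
    calc c * (y - x) ≤ ((L y - L x) / (y - x)) * (y - x) :=
          mul_le_mul_of_nonneg_right hcc (le_of_lt hyx)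
      _ = L y - L x := by field_simp
  have hD : c * h ≤ L (a + h) - L a := by
    have := hMVT a hamem (a + h) (Set.right_mem_Icc.2 haah) (by linarith)
    simpa using this
  have hDpos : 0 < L (a + h) - L a := lt_of_lt_of_le (by positivity) hD
  refine ⟨by linarith, ?_⟩
  intro x hx
  have hax : a ≤ x := hx.1
  have hxa : x - a ≤ h := by linarith [hx.2]
  set D := L (a + h) - L a with hDdef
  set N := L x - L a with hNdef
  have hkey : N / D - (x - a) / h = (h * N - (x - a) * D) / (h * D) := by
    field_simp
  have hnum : |h * N - (x - a) * D| ≤ 2 * C * h ^ 3 := by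
    have h1 := hB x hx
    have h2 := hB (a + h) (Set.right_mem_Icc.2 haah)
    have heq : h * N - (x - a) * D
        = h * (N - L' a * (x - a)) - (x - a) * (D - L' a * h) := by ring
    have h2' : |D - L' a * h| ≤ C * h * h := by
      have : a + h - a = h := by ring
      rw [hDdef]
      calc |L (a + h) - L a - L' a * h| = |L (a + h) - L a - L' a * (a + h - a)| := by
            rw [this]
        _ ≤ C * (a + h - a) * (a + h - a) := h2
        _ = C * h * h := by rw [this]
    calc |h * N - (x - a) * D|
        ≤ h * |N - L' a * (x - a)| + (x - a) * |D - L' a * h| := by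
          rw [heq]
          refine (abs_sub _ _).trans ?_
          rw [abs_mul, abs_mul, abs_of_pos hh, abs_of_nonneg (by linarith : (0:ℝ) ≤ x - a)]
      _ ≤ h * (C * (x - a) * (x - a)) + (x - a) * (C * h * h) :=
          add_le_add (mul_le_mul_of_nonneg_left h1 hh.le)
            (mul_le_mul_of_nonneg_left h2' (by linarith))
      _ ≤ h * (C * h * h) + h * (C * h * h) := by
          gcongr <;> nlinarith
      _ = 2 * C * h ^ 3 := by ring
  have hden : c * h ^ 2 ≤ h * D := by nlinarith
  rw [hkey, abs_div, abs_of_pos (by positivity : (0:ℝ) < h * D)]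
  calc |h * N - (x - a) * D| / (h * D) ≤ (2 * C * h ^ 3) / (c * h ^ 2) := by
        apply div_le_div₀ (by positivity) hnum (by positivity) hden
    _ = 2 * C * h / c := by field_simp
    _ ≤ 3 * C * h / c := by
        gcongr <;> nlinarith
end

section
/- Let d ∈ ℕ, R > 0, and M > 0. Then there exists a constant C, depending only on d and R, such that the following holds: for every random vector X in ℝ^d whose law has a density bounded by M with respect to Lebesgue measure and is supported in the closed ball of radius R centered at the origin, for all unit vectors β, β' ∈ ℝ^d and all real numbers a ≤ b: | P(a < X^⊤β ≤ b) − P(a < X^⊤β' ≤ b) | ≤ C·M·‖β − β'‖. -/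
open MeasureTheory

lemma coord_abs_le_norm {d : ℕ} (y : EuclideanSpace ℝ (Fin d)) (i : Fin d) : |y i| ≤ ‖y‖ := by
  have h := abs_real_inner_le_norm (EuclideanSpace.single i (1:ℝ)) y
  rw [EuclideanSpace.inner_single_left, EuclideanSpace.norm_single] at h
  simpa using h

lemma slab_vol {d : ℕ} {R : ℝ} (β : EuclideanSpace ℝ (Fin d)) (hβ : ‖β‖ = 1)
    (c c' : ℝ) :
    volume {x : EuclideanSpace ℝ (Fin d) |
        (c < (inner ℝ x β : ℝ) ∧ (inner ℝ x β : ℝ) ≤ c') ∧ ‖x‖ ≤ R} ≤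
      ENNReal.ofReal (c' - c) * ENNReal.ofReal (2 * R) ^ (d - 1) := by
  classical
  rcases Nat.eq_zero_or_pos d with hd | hd
  · subst hd
    exfalso
    have : β = 0 := Subsingleton.elim _ _
    rw [this, norm_zero] at hβ; exact one_ne_zero hβ.symm
  haveI : NeZero d := ⟨hd.ne'⟩
  -- orthonormal basis with b 0 = β
  have hcard : Module.finrank ℝ (EuclideanSpace ℝ (Fin d)) = Fintype.card (Fin d) := by
    simp [finrank_euclideanSpace]
  have horth : Orthonormal ℝ (({0} : Set (Fin d)).restrict (fun _ : Fin d => β)) := by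
    constructor
    · intro i; exact hβ
    · intro i j hij
      exact absurd (Subsingleton.elim i j) hij
  obtain ⟨b, hb⟩ := horth.exists_orthonormalBasis_extension_of_card_eq hcard
  have hb0 : b 0 = β := hb 0 rfl
  have hrepr : ∀ x : EuclideanSpace ℝ (Fin d), (b.repr x) 0 = (inner ℝ x β : ℝ) := by
    intro x
    rw [b.repr_apply_apply, hb0, real_inner_comm]
  set T : Set (EuclideanSpace ℝ (Fin d)) :=
    {y | (c < y 0 ∧ y 0 ≤ c') ∧ ‖y‖ ≤ R} with hT
  have hpre : {x : EuclideanSpace ℝ (Fin d) |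
      (c < (inner ℝ x β : ℝ) ∧ (inner ℝ x β : ℝ) ≤ c') ∧ ‖x‖ ≤ R} = b.repr ⁻¹' T := by
    ext x
    simp only [Set.mem_setOf_eq, Set.mem_preimage, hT, hrepr x,
      b.repr.norm_map]
  have hTmeas : MeasurableSet T := by
    have h1 : Continuous fun y : EuclideanSpace ℝ (Fin d) => y 0 :=
      (EuclideanSpace.proj (0 : Fin d)).continuous
    have h2 : Continuous fun y : EuclideanSpace ℝ (Fin d) => ‖y‖ := continuous_norm
    exact (((measurableSet_lt measurable_const h1.measurable).inter
        (measurableSet_le h1.measurable measurable_const)).inter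
        (measurableSet_le h2.measurable measurable_const))
  rw [hpre, (b.measurePreserving_repr).measure_preimage hTmeas.nullMeasurableSet]
  -- bound T by a box
  set s : Fin d → Set ℝ := fun i => if i = 0 then Set.Ioc c c' else Set.Icc (-R) R with hs
  have hsub : T ⊆ ((MeasurableEquiv.toLp 2 (Fin d → ℝ)).symm) ⁻¹' (Set.pi Set.univ s) := by
    intro y hy
    intro i _
    simp only [hs]
    by_cases hi : i = 0
    · subst hi; simp only [if_pos rfl]
      exact ⟨hy.1.1, hy.1.2⟩
    · simp only [if_neg hi]
      have := (coord_abs_le_norm y i).trans hy.2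
      rw [abs_le] at this
      exact ⟨this.1, this.2⟩
  refine (measure_mono hsub).trans ?_
  rw [(EuclideanSpace.volume_preserving_symm_measurableEquiv_toLp (Fin d)).measure_preimage
    (MeasurableSet.univ_pi (fun i => by
      by_cases hi : i = 0 <;> simp [hs, hi, measurableSet_Ioc, measurableSet_Icc])).nullMeasurableSet]
  rw [volume_pi_pi]
  have hfac : ∀ i : Fin d, volume (s i) =
      if i = 0 then ENNReal.ofReal (c' - c) else ENNReal.ofReal (2 * R) := by
    intro i
    by_cases hi : i = 0
    · simp [hs, hi, Real.volume_Ioc]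
    · simp only [hs, if_neg hi, Real.volume_Icc]
      congr 1; ring
  calc ∏ i : Fin d, volume (s i)
      = ∏ i : Fin d, (if i = 0 then ENNReal.ofReal (c' - c) else ENNReal.ofReal (2 * R)) := by
        exact Finset.prod_congr rfl fun i _ => hfac i
    _ = ENNReal.ofReal (c' - c) * ENNReal.ofReal (2 * R) ^ (d - 1) := by
        rw [← Finset.mul_prod_erase Finset.univ _ (Finset.mem_univ (0 : Fin d))]
        simp only [if_pos rfl]
        congr 1
        rw [Finset.prod_congr rfl (fun i hi => if_neg (Finset.ne_of_mem_erase hi)),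
          Finset.prod_const, Finset.card_erase_of_mem (Finset.mem_univ _),
          Finset.card_univ, Fintype.card_fin]
    _ ≤ ENNReal.ofReal (c' - c) * ENNReal.ofReal (2 * R) ^ (d - 1) := le_rfl

/-- slab probabilities of a compactly supported bounded-density law are
Lipschitz in the direction vector, with a constant depending only on `d` and `R`. -/
theorem stmt9 (d : ℕ) (R M : ℝ) (hR : 0 < R) (hM : 0 < M) :
    ∃ C : ℝ, ∀ (f : EuclideanSpace ℝ (Fin d) → ENNReal),
      (∀ x, f x ≤ ENNReal.ofReal M) →
      (∀ x, x ∉ Metric.closedBall (0 : EuclideanSpace ℝ (Fin d)) R → f x = 0) →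
      IsProbabilityMeasure (volume.withDensity f) →
      ∀ β β' : EuclideanSpace ℝ (Fin d), ‖β‖ = 1 → ‖β'‖ = 1 →
      ∀ a b : ℝ, a ≤ b →
        |((volume.withDensity f)
            {x | a < inner ℝ x β ∧ (inner ℝ x β : ℝ) ≤ b}).toReal -
         ((volume.withDensity f)
            {x | a < inner ℝ x β' ∧ (inner ℝ x β' : ℝ) ≤ b}).toReal|
          ≤ C * M * ‖β - β'‖ := by
  classical
  refine ⟨2 * R * (2 * R) ^ (d - 1), ?_⟩
  intro f hfM hfsupp hprob β β' hβ hβ' a b hab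
  haveI := hprob
  set μ := volume.withDensity f with hμ
  have hmeasγ : ∀ γ : EuclideanSpace ℝ (Fin d),
      MeasurableSet {x : EuclideanSpace ℝ (Fin d) | a < (inner ℝ x γ : ℝ) ∧ (inner ℝ x γ : ℝ) ≤ b} := by
    intro γ
    have hcont : Continuous fun x : EuclideanSpace ℝ (Fin d) => (inner ℝ x γ : ℝ) :=
      continuous_id.inner continuous_const
    exact measurableSet_Ioc.preimage hcont.measurable
  -- μ of any measurable set is bounded by M * volume (∩ ball)
  have hμle : ∀ T : Set (EuclideanSpace ℝ (Fin d)), MeasurableSet T →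
      μ T ≤ ENNReal.ofReal M * volume (T ∩ Metric.closedBall 0 R) := by
    intro T hT
    rw [hμ, withDensity_apply f hT]
    calc ∫⁻ x in T, f x
        ≤ ∫⁻ x in T, (Metric.closedBall (0 : EuclideanSpace ℝ (Fin d)) R).indicator
            (fun _ => ENNReal.ofReal M) x := by
          refine lintegral_mono fun x => ?_
          by_cases hx : x ∈ Metric.closedBall (0 : EuclideanSpace ℝ (Fin d)) R
          · rw [Set.indicator_of_mem hx]; exact hfM x
          · rw [Set.indicator_of_notMem hx, hfsupp x hx]
      _ = ENNReal.ofReal M * volume (T ∩ Metric.closedBall 0 R) := by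
          rw [lintegral_indicator measurableSet_closedBall, setLIntegral_const,
            Measure.restrict_apply measurableSet_closedBall, Set.inter_comm]
  -- bound on the symmetric-difference pieces
  have key : ∀ γ γ' : EuclideanSpace ℝ (Fin d), ‖γ‖ = 1 → ‖γ'‖ = 1 →
      μ ({x | a < (inner ℝ x γ : ℝ) ∧ (inner ℝ x γ : ℝ) ≤ b} \
         {x | a < (inner ℝ x γ' : ℝ) ∧ (inner ℝ x γ' : ℝ) ≤ b}) ≤
        ENNReal.ofReal M *
          (2 * (ENNReal.ofReal (R * ‖γ - γ'‖) * ENNReal.ofReal (2 * R) ^ (d - 1))) := by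
    intro γ γ' hγ hγ'
    set ε := R * ‖γ - γ'‖ with hε
    have hε0 : 0 ≤ ε := mul_nonneg hR.le (norm_nonneg _)
    have hsub : ({x | a < (inner ℝ x γ : ℝ) ∧ (inner ℝ x γ : ℝ) ≤ b} \
         {x | a < (inner ℝ x γ' : ℝ) ∧ (inner ℝ x γ' : ℝ) ≤ b}) ∩ Metric.closedBall 0 R ⊆
        {x : EuclideanSpace ℝ (Fin d) |
            (a < (inner ℝ x γ : ℝ) ∧ (inner ℝ x γ : ℝ) ≤ a + ε) ∧ ‖x‖ ≤ R} ∪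
        {x : EuclideanSpace ℝ (Fin d) |
            (b - ε < (inner ℝ x γ : ℝ) ∧ (inner ℝ x γ : ℝ) ≤ b) ∧ ‖x‖ ≤ R} := by
      rintro x ⟨⟨⟨h1, h2⟩, hnot⟩, hball⟩
      have hxn : ‖x‖ ≤ R := by rwa [Metric.mem_closedBall, dist_zero_right] at hball
      have habs : |(inner ℝ x γ : ℝ) - (inner ℝ x γ' : ℝ)| ≤ ε := by
        rw [← inner_sub_right]
        calc |(inner ℝ x (γ - γ') : ℝ)| ≤ ‖x‖ * ‖γ - γ'‖ := abs_real_inner_le_norm x (γ - γ')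
          _ ≤ R * ‖γ - γ'‖ := by
              exact mul_le_mul_of_nonneg_right hxn (norm_nonneg _)
      rw [abs_le] at habs
      rw [Set.mem_setOf_eq, not_and_or, not_lt, not_le] at hnot
      rcases hnot with h | h
      · exact Or.inl ⟨⟨h1, by linarith⟩, hxn⟩
      · exact Or.inr ⟨⟨by linarith, h2⟩, hxn⟩
    calc μ _ ≤ ENNReal.ofReal M *
          volume (({x | a < (inner ℝ x γ : ℝ) ∧ (inner ℝ x γ : ℝ) ≤ b} \
            {x | a < (inner ℝ x γ' : ℝ) ∧ (inner ℝ x γ' : ℝ) ≤ b}) ∩ Metric.closedBall 0 R) :=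
          hμle _ ((hmeasγ γ).diff (hmeasγ γ'))
      _ ≤ ENNReal.ofReal M *
          (volume {x : EuclideanSpace ℝ (Fin d) |
              (a < (inner ℝ x γ : ℝ) ∧ (inner ℝ x γ : ℝ) ≤ a + ε) ∧ ‖x‖ ≤ R} +
           volume {x : EuclideanSpace ℝ (Fin d) |
              (b - ε < (inner ℝ x γ : ℝ) ∧ (inner ℝ x γ : ℝ) ≤ b) ∧ ‖x‖ ≤ R}) := by
          exact mul_le_mul_right ((measure_mono hsub).trans (measure_union_le _ _)) _
      _ ≤ ENNReal.ofReal M *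
          (2 * (ENNReal.ofReal ε * ENNReal.ofReal (2 * R) ^ (d - 1))) := by
          refine mul_le_mul_right ?_ _
          have v1 := slab_vol (R := R) γ hγ a (a + ε)
          have v2 := slab_vol (R := R) γ hγ (b - ε) b
          rw [add_sub_cancel_left] at v1
          rw [sub_sub_cancel] at v2
          calc _ ≤ ENNReal.ofReal ε * ENNReal.ofReal (2 * R) ^ (d - 1) +
                ENNReal.ofReal ε * ENNReal.ofReal (2 * R) ^ (d - 1) := add_le_add v1 v2
            _ = 2 * (ENNReal.ofReal ε * ENNReal.ofReal (2 * R) ^ (d - 1)) := (two_mul _).symm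
  -- assemble
  set S := {x : EuclideanSpace ℝ (Fin d) | a < (inner ℝ x β : ℝ) ∧ (inner ℝ x β : ℝ) ≤ b} with hS
  set S' := {x : EuclideanSpace ℝ (Fin d) | a < (inner ℝ x β' : ℝ) ∧ (inner ℝ x β' : ℝ) ≤ b} with hS'
  set B : ENNReal := ENNReal.ofReal M *
    (2 * (ENNReal.ofReal (R * ‖β - β'‖) * ENNReal.ofReal (2 * R) ^ (d - 1))) with hB
  have hBne : B ≠ ⊤ := by
    rw [hB]
    exact ENNReal.mul_ne_top ENNReal.ofReal_ne_top
      (ENNReal.mul_ne_top (by norm_num)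
        (ENNReal.mul_ne_top ENNReal.ofReal_ne_top (ENNReal.pow_ne_top ENNReal.ofReal_ne_top)))
  have h1 : μ S ≤ μ S' + B := by
    calc μ S ≤ μ (S' ∪ (S \ S')) := measure_mono fun x hx => by
          by_cases h : x ∈ S'
          · exact Or.inl h
          · exact Or.inr ⟨hx, h⟩
      _ ≤ μ S' + μ (S \ S') := measure_union_le _ _
      _ ≤ μ S' + B := add_le_add_right (key β β' hβ hβ') _
  have h2 : μ S' ≤ μ S + B := by
    have := key β' β hβ' hβ
    rw [norm_sub_rev] at this
    calc μ S' ≤ μ (S ∪ (S' \ S)) := measure_mono fun x hx => by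
          by_cases h : x ∈ S
          · exact Or.inl h
          · exact Or.inr ⟨hx, h⟩
      _ ≤ μ S + μ (S' \ S) := measure_union_le _ _
      _ ≤ μ S + B := add_le_add_right this _
  have hSne : μ S ≠ ⊤ := measure_ne_top μ S
  have hS'ne : μ S' ≠ ⊤ := measure_ne_top μ S'
  have hBtr : B.toReal = 2 * R * (2 * R) ^ (d - 1) * M * ‖β - β'‖ := by
    rw [hB, ENNReal.toReal_mul, ENNReal.toReal_mul, ENNReal.toReal_mul, ENNReal.toReal_pow,
      ENNReal.toReal_ofReal hM.le, ENNReal.toReal_ofReal (mul_nonneg hR.le (norm_nonneg _)),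
      ENNReal.toReal_ofReal (by linarith : (0:ℝ) ≤ 2 * R), ENNReal.toReal_ofNat]
    ring
  rw [abs_sub_le_iff]
  constructor
  · have := ENNReal.toReal_mono (ENNReal.add_ne_top.2 ⟨hS'ne, hBne⟩) h1
    rw [ENNReal.toReal_add hS'ne hBne] at this
    rw [← hBtr]; linarith
  · have := ENNReal.toReal_mono (ENNReal.add_ne_top.2 ⟨hSne, hBne⟩) h2
    rw [ENNReal.toReal_add hSne hBne] at this
    rw [← hBtr]; linarith
end

section
/- Let m ∈ ℕ, let q₀, q₁ > 0 with q₀ + q₁ = 1, and for k = 1, …, m let q_{0,k} > 0 and q_{1,k} > 0 with ∑_{k=1}^m q_{0,k} = q₀ and ∑_{k=1}^m q_{1,k} = q₁. Define c_{0,k} = (q_{1,k}/q₁ − q_{0,k}/q₀)/(q_{0,k} + q_{1,k}) + 1/q₀ and c_{1,k} = (q_{1,k}/q₁ − q_{0,k}/q₀)/(q_{0,k} + q_{1,k}) − 1/q₁. Then q₀·q₁·∑_{k=1}^m ( c_{0,k}²·q_{0,k} + c_{1,k}²·q_{1,k} ) = 1 − (1/(q₀q₁))·∑_{k=1}^m (q₁·q_{0,k}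 − q₀·q_{1,k})²/(q_{0,k} + q_{1,k}). -/
/-- the covariance calculation showing the weighted sum of squared
coefficients of the Brownian-bridge combination equals the normalizing constant squared. -/
theorem stmt10 (m : ℕ) (q₀ q₁ : ℝ) (hq₀ : 0 < q₀) (hq₁ : 0 < q₁) (hq : q₀ + q₁ = 1)
    (q0 q1 : Fin m → ℝ) (hq0 : ∀ k, 0 < q0 k) (hq1 : ∀ k, 0 < q1 k)
    (hs0 : ∑ k, q0 k = q₀) (hs1 : ∑ k, q1 k = q₁)
    (c0 c1 : Fin m → ℝ)
    (hc0 : ∀ k, c0 k = (q1 k / q₁ - q0 k / q₀) / (q0 k + q1 k) + 1 / q₀)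
    (hc1 : ∀ k, c1 k = (q1 k / q₁ - q0 k / q₀) / (q0 k + q1 k) - 1 / q₁) :
    q₀ * q₁ * ∑ k, (c0 k ^ 2 * q0 k + c1 k ^ 2 * q1 k)
      = 1 - (1 / (q₀ * q₁)) * ∑ k, (q₁ * q0 k - q₀ * q1 k) ^ 2 / (q0 k + q1 k) := by
  have h0 : q₀ ≠ 0 := hq₀.ne'
  have h1 : q₁ ≠ 0 := hq₁.ne'
  have key : ∀ k, q₀ * q₁ * (c0 k ^ 2 * q0 k + c1 k ^ 2 * q1 k)
      = (q0 k * (q₁ / q₀) + q1 k * (q₀ / q₁))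
        - (1 / (q₀ * q₁)) * ((q₁ * q0 k - q₀ * q1 k) ^ 2 / (q0 k + q1 k)) := by
    intro k
    have hs : q0 k + q1 k ≠ 0 := (add_pos (hq0 k) (hq1 k)).ne'
    rw [hc0, hc1]
    field_simp
    ring
  rw [Finset.mul_sum]
  simp_rw [key]
  rw [Finset.sum_sub_distrib, Finset.sum_add_distrib, ← Finset.sum_mul, ← Finset.sum_mul,
    hs0, hs1, ← Finset.mul_sum]
  field_simp
  linarith [sq_nonneg (q₀ - q₁), congrArg (fun t => q₀ * q₁ * t) hq]
end

section
/- Let q₀, q₁ > 0 with q₀ + q₁ = 1, and define g(x,y) = (q₁·x − q₀·y)²/(x + y) for x, y > 0. Then for all x, y > 0: |∂_x g(x,y)| ≤ 3·max(q₀, q₁)² and |∂_y g(x,y)| ≤ 3·max(q₀, q₁)². Consequently, g is Lipschitz on (0, ∞)²: |g(x,y) − g(x',y')| ≤ 3·max(q₀, q₁)²·( |x − x'| + |y − y'| ) for all x, y, x', y' > 0. -/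
private lemma ratio_bd (q₀ q₁ : ℝ) (hq₀ : 0 < q₀) (hq₁ : 0 < q₁)
    {x y : ℝ} (hx : 0 < x) (hy : 0 < y) :
    |(q₁ * x - q₀ * y) / (x + y)| ≤ max q₀ q₁ := by
  have hs : 0 < x + y := by linarith
  rw [abs_div, abs_of_pos hs, div_le_iff₀ hs]
  have h1 : q₀ ≤ max q₀ q₁ := le_max_left _ _
  have h2 : q₁ ≤ max q₀ q₁ := le_max_right _ _
  rw [abs_le]
  constructor <;> nlinarith

private lemma three_bd (M a b c : ℝ) (hM : 0 ≤ M) (ha : |a| ≤ M) (hb : |b| ≤ M)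
    (hc : |c| ≤ M) : |c * a + c * b - a * b| ≤ 3 * M ^ 2 := by
  have h1 : |c * a + c * b - a * b| ≤ |c * a| + |c * b| + |a * b| := by
    calc |c * a + c * b - a * b| ≤ |c * a + c * b| + |a * b| := abs_sub _ _
      _ ≤ |c * a| + |c * b| + |a * b| := by
        have := abs_add_le (c * a) (c * b); linarith
  rw [abs_mul, abs_mul, abs_mul] at h1
  nlinarith [abs_nonneg a, abs_nonneg b, abs_nonneg c]

/-- derivative bounds and Lipschitz property for
`g(x,y) = (q₁·x − q₀·y)²/(x + y)` on `(0,∞)²`. -/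
theorem stmt15 (q₀ q₁ : ℝ) (hq₀ : 0 < q₀) (hq₁ : 0 < q₁) (hq : q₀ + q₁ = 1)
    (g : ℝ → ℝ → ℝ)
    (hg : ∀ x y : ℝ, g x y = (q₁ * x - q₀ * y) ^ 2 / (x + y)) :
    (∀ x y : ℝ, 0 < x → 0 < y →
      |deriv (fun s => g s y) x| ≤ 3 * max q₀ q₁ ^ 2 ∧
      |deriv (fun t => g x t) y| ≤ 3 * max q₀ q₁ ^ 2) ∧
    (∀ x y x' y' : ℝ, 0 < x → 0 < y → 0 < x' → 0 < y' →
      |g x y - g x' y'| ≤ 3 * max q₀ q₁ ^ 2 * (|x - x'| + |y - y'|)) := by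
  set M := max q₀ q₁ with hM
  have hM0 : 0 < M := lt_of_lt_of_le hq₀ (le_max_left _ _)
  have h1 : q₀ ≤ M := le_max_left _ _
  have h2 : q₁ ≤ M := le_max_right _ _
  -- Lipschitz in the first variable
  have lipx : ∀ x y x' : ℝ, 0 < x → 0 < y → 0 < x' →
      |g x y - g x' y| ≤ 3 * M ^ 2 * |x - x'| := by
    intro x y x' hx hy hx'
    have hs : (x + y) ≠ 0 := by positivity
    have hs' : (x' + y) ≠ 0 := by positivity
    have key : g x y - g x' y = (x - x') *
        (q₁ * ((q₁ * x - q₀ * y) / (x + y)) + q₁ * ((q₁ * x' - q₀ * y) / (x' + y))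
          - ((q₁ * x - q₀ * y) / (x + y)) * ((q₁ * x' - q₀ * y) / (x' + y))) := by
      rw [hg, hg]; field_simp; ring
    rw [key, abs_mul, mul_comm]
    gcongr
    exact three_bd M _ _ q₁ hM0.le (ratio_bd q₀ q₁ hq₀ hq₁ hx hy)
      (ratio_bd q₀ q₁ hq₀ hq₁ hx' hy) (by rw [abs_of_pos hq₁]; exact h2)
  -- Lipschitz in the second variable
  have lipy : ∀ x y y' : ℝ, 0 < x → 0 < y → 0 < y' →
      |g x y - g x y'| ≤ 3 * M ^ 2 * |y - y'| := by
    intro x y y' hx hy hy'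
    have hs : (x + y) ≠ 0 := by positivity
    have hs' : (x + y') ≠ 0 := by positivity
    have key : g x y - g x y' = (y - y') *
        ((-q₀) * ((q₁ * x - q₀ * y) / (x + y)) + (-q₀) * ((q₁ * x - q₀ * y') / (x + y'))
          - ((q₁ * x - q₀ * y) / (x + y)) * ((q₁ * x - q₀ * y') / (x + y'))) := by
      rw [hg, hg]; field_simp; ring
    rw [key, abs_mul, mul_comm]
    gcongr
    exact three_bd M _ _ (-q₀) hM0.le (ratio_bd q₀ q₁ hq₀ hq₁ hx hy)
      (ratio_bd q₀ q₁ hq₀ hq₁ hx hy') (by rw [abs_neg, abs_of_pos hq₀]; exact h1)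
  constructor
  · intro x y hx hy
    have hsx : (x + y) ≠ 0 := by positivity
    have hux : HasDerivAt (fun s : ℝ => g s y)
        ((2 * (q₁ * x - q₀ * y) * q₁ * (x + y) - (q₁ * x - q₀ * y) ^ 2 * 1) / (x + y) ^ 2) x := by
      have hnum : HasDerivAt (fun s : ℝ => (q₁ * s - q₀ * y) ^ 2)
          (2 * (q₁ * x - q₀ * y) * q₁) x := by
        have hl : HasDerivAt (fun s : ℝ => q₁ * s - q₀ * y) q₁ x := by
          simpa using ((hasDerivAt_id x).const_mul q₁).sub_const (q₀ * y)
        simpa [mul_comm, mul_assoc] using hl.fun_pow 2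
      have hden : HasDerivAt (fun s : ℝ => s + y) 1 x := (hasDerivAt_id x).add_const y
      have := hnum.div hden hsx
      have hgfun : (fun s : ℝ => g s y) = fun s => (q₁ * s - q₀ * y) ^ 2 / (s + y) := by
        funext s; exact hg s y
      rw [hgfun]
      exact this
    have huy : HasDerivAt (fun t : ℝ => g x t)
        ((2 * (q₁ * x - q₀ * y) * (-q₀) * (x + y) - (q₁ * x - q₀ * y) ^ 2 * 1) / (x + y) ^ 2) y := by
      have hnum : HasDerivAt (fun t : ℝ => (q₁ * x - q₀ * t) ^ 2)
          (2 * (q₁ * x - q₀ * y) * (-q₀)) y := by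
        have hl : HasDerivAt (fun t : ℝ => q₁ * x - q₀ * t) (-q₀) y := by
          simpa using (((hasDerivAt_id y).const_mul q₀).const_sub (q₁ * x))
        simpa [mul_comm, mul_assoc] using hl.fun_pow 2
      have hden : HasDerivAt (fun t : ℝ => x + t) 1 y := by
        simpa using (hasDerivAt_id y).const_add x
      have := hnum.div hden hsx
      have hgfun : (fun t : ℝ => g x t) = fun t => (q₁ * x - q₀ * t) ^ 2 / (x + t) := by
        funext t; exact hg x t
      rw [hgfun]
      exact this
    have hr := ratio_bd q₀ q₁ hq₀ hq₁ hx hy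
    have hsp : 0 < x + y := by linarith
    have habs : -(M * (x + y)) ≤ q₁ * x - q₀ * y ∧ q₁ * x - q₀ * y ≤ M * (x + y) := by
      rw [abs_div, abs_of_pos hsp, div_le_iff₀ hsp, abs_le] at hr
      constructor <;> nlinarith [hr.1, hr.2]
    have hu2 : (q₁ * x - q₀ * y) ^ 2 ≤ M ^ 2 * (x + y) ^ 2 := by
      nlinarith [mul_nonneg (by linarith [habs.2] : (0:ℝ) ≤ M * (x + y) - (q₁ * x - q₀ * y))
        (by linarith [habs.1] : (0:ℝ) ≤ M * (x + y) + (q₁ * x - q₀ * y))]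
    have hq1M : q₁ ^ 2 * (x + y) ^ 2 ≤ M ^ 2 * (x + y) ^ 2 := by
      nlinarith [mul_le_mul h2 h2 hq₁.le hM0.le, sq_nonneg (x + y)]
    have hq0M : q₀ ^ 2 * (x + y) ^ 2 ≤ M ^ 2 * (x + y) ^ 2 := by
      nlinarith [mul_le_mul h1 h1 hq₀.le hM0.le, sq_nonneg (x + y)]
    constructor
    · rw [hux.deriv, abs_div, abs_of_pos (by positivity : (0:ℝ) < (x + y) ^ 2),
        div_le_iff₀ (by positivity : (0:ℝ) < (x + y) ^ 2), abs_le]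
      constructor
      · nlinarith [sq_nonneg (q₁ * (x + y) + (q₁ * x - q₀ * y))]
      · nlinarith [sq_nonneg (q₁ * (x + y) - (q₁ * x - q₀ * y))]
    · rw [huy.deriv, abs_div, abs_of_pos (by positivity : (0:ℝ) < (x + y) ^ 2),
        div_le_iff₀ (by positivity : (0:ℝ) < (x + y) ^ 2), abs_le]
      constructor
      · nlinarith [sq_nonneg (q₀ * (x + y) - (q₁ * x - q₀ * y))]
      · nlinarith [sq_nonneg (q₀ * (x + y) + (q₁ * x - q₀ * y))]
  · intro x y x' y' hx hy hx' hy'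
    calc |g x y - g x' y'| ≤ |g x y - g x' y| + |g x' y - g x' y'| := by
          have := abs_add_le (g x y - g x' y) (g x' y - g x' y')
          simpa using this
      _ ≤ 3 * M ^ 2 * |x - x'| + 3 * M ^ 2 * |y - y'| :=
          add_le_add (lipx x y x' hx hy hx') (lipy x' y y' hx' hy hy')
      _ = 3 * M ^ 2 * (|x - x'| + |y - y'|) := by ring
end

section
/- Let (Ω, F, P) be a probability space, m ∈ ℕ, and q₀, q₁ > 0 with q₀ + q₁ = 1. For k = 1, …, m let q_{0,k} > 0 and q_{1,k} > 0 with ∑_{k=1}^m q_{0,k} = q₀ and ∑_{k=1}^m q_{1,k} = q₁, and define c_{0,k} = (q_{1,k}/q₁ − q_{0,k}/q₀)/(q_{0,k} + q_{1,k}) + 1/q₀, c_{1,k} = (q_{1,k}/q₁ − q_{0,k}/q₀)/(q_{0,k} + q_{1,k}) − 1/q₁, and c = √(1 − (1/(q₀q₁))·∑_{k=1}^m (q₁·q_{0,k} − q₀·q_{1,k})²/(q_{0,k} + q_{1,k})); assume c > 0. For j ∈ {0,1} and k = 1, …, m let D_{j,k} : [0,1] → Ω → ℝ be processes such that each D_{j,k}(u)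 is square-integrable with E[D_{j,k}(u)] = 0, E[D_{j,k}(u)·D_{j,k}(v)] = q_{j,k}·(min(u,v) − u·v) for all u, v ∈ [0,1], and E[D_{j,k}(u)·D_{j',k'}(v)] = 0 whenever (j,k) ≠ (j',k'). Define B̃(u) = (√(q₀q₁)/c)·∑_{k=1}^m ( c_{0,k}·D_{0,k}(u) + c_{1,k}·D_{1,k}(u) ). Then for all u, v ∈ [0,1]: E[B̃(u)] = 0 and E[B̃(u)·B̃(v)] = min(u,v) − u·v. -/
open MeasureTheory
open scoped ENNReal

private lemma enn_half : (1:ℝ≥0∞)/1 = 1/2 + 1/2 := by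
  rw [ENNReal.div_add_div_same, one_add_one_eq_two,
    ENNReal.div_self (two_ne_zero) (ENNReal.ofNat_ne_top), one_div_one]

/-- the normalized linear combination `B̃` of `2m` uncorrelated Brownian
bridges, with weights determined by the cell probabilities and the normalizing constant
`c`, has the mean and covariance structure of a standard Brownian bridge. -/
theorem stmt16 {Ω : Type*} [MeasurableSpace Ω] (μ : Measure Ω) [IsProbabilityMeasure μ]
    (m : ℕ) (q₀ q₁ : ℝ) (hq₀ : 0 < q₀) (hq₁ : 0 < q₁) (hq : q₀ + q₁ = 1)
    (q : Fin 2 → Fin m → ℝ) (hqpos : ∀ j k, 0 < q j k)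
    (hs0 : ∑ k, q 0 k = q₀) (hs1 : ∑ k, q 1 k = q₁)
    (c : Fin 2 → Fin m → ℝ)
    (hc0 : ∀ k, c 0 k = (q 1 k / q₁ - q 0 k / q₀) / (q 0 k + q 1 k) + 1 / q₀)
    (hc1 : ∀ k, c 1 k = (q 1 k / q₁ - q 0 k / q₀) / (q 0 k + q 1 k) - 1 / q₁)
    (cn : ℝ)
    (hcn : cn = Real.sqrt
      (1 - (1 / (q₀ * q₁)) * ∑ k, (q₁ * q 0 k - q₀ * q 1 k) ^ 2 / (q 0 k + q 1 k)))
    (hcnpos : 0 < cn)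
    (D : Fin 2 → Fin m → ℝ → Ω → ℝ)
    (hL2 : ∀ j k, ∀ u ∈ Set.Icc (0 : ℝ) 1, MemLp (D j k u) 2 μ)
    (hmean : ∀ j k, ∀ u ∈ Set.Icc (0 : ℝ) 1, ∫ ω, D j k u ω ∂μ = 0)
    (hcov : ∀ j k, ∀ u ∈ Set.Icc (0 : ℝ) 1, ∀ v ∈ Set.Icc (0 : ℝ) 1,
      ∫ ω, D j k u ω * D j k v ω ∂μ = q j k * (min u v - u * v))
    (huncorr : ∀ j k j' k', (j, k) ≠ (j', k') →
      ∀ u ∈ Set.Icc (0 : ℝ) 1, ∀ v ∈ Set.Icc (0 : ℝ) 1,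
      ∫ ω, D j k u ω * D j' k' v ω ∂μ = 0)
    (Bt : ℝ → Ω → ℝ)
    (hBt : ∀ u ω, Bt u ω
      = (Real.sqrt (q₀ * q₁) / cn) * ∑ k, (c 0 k * D 0 k u ω + c 1 k * D 1 k u ω)) :
    ∀ u ∈ Set.Icc (0 : ℝ) 1, ∀ v ∈ Set.Icc (0 : ℝ) 1,
      (∫ ω, Bt u ω ∂μ = 0) ∧ ∫ ω, Bt u ω * Bt v ω ∂μ = min u v - u * v := by
  intro u hu v hv
  set κ : ℝ := Real.sqrt (q₀ * q₁) / cn with hκ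
  -- basic integrability
  have hInt : ∀ j k, ∀ w ∈ Set.Icc (0:ℝ) 1, Integrable (D j k w) μ :=
    fun j k w hw => (hL2 j k w hw).integrable one_le_two
  have hIntMul : ∀ (j k j' k' : _), Integrable (fun ω => D j k u ω * D j' k' v ω) μ := by
    intro j k j' k'
    exact memLp_one_iff_integrable.mp ((hL2 j' k' v hv).smul (hL2 j k u hu))
  -- reindex: Bt as a sum over pairs
  have hBt' : ∀ w ω, Bt w ω = κ * ∑ p : Fin 2 × Fin m, c p.1 p.2 * D p.1 p.2 w ω := by
    intro w ω
    rw [hBt w ω, Fintype.sum_prod_type, Fin.sum_univ_two, ← Finset.sum_add_distrib]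
  -- mean zero, for any time in [0,1]
  have hmean0 : ∀ w ∈ Set.Icc (0:ℝ) 1, ∫ ω, Bt w ω ∂μ = 0 := by
    intro w hw
    simp_rw [hBt' w]
    rw [integral_const_mul, integral_finset_sum _
      (fun p _ => (hInt p.1 p.2 w hw).const_mul _)]
    have : ∀ p : Fin 2 × Fin m,
        ∫ ω, c p.1 p.2 * D p.1 p.2 w ω ∂μ = 0 := by
      intro p
      rw [integral_const_mul, hmean p.1 p.2 w hw, mul_zero]
    rw [Finset.sum_congr rfl (fun p _ => this p), Finset.sum_const, smul_zero, mul_zero]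
  refine ⟨hmean0 u hu, ?_⟩
  -- covariance
  have hq01 : (0:ℝ) < q₀ * q₁ := mul_pos hq₀ hq₁
  have hκ2 : κ ^ 2 = (q₀ * q₁) / cn ^ 2 := by
    rw [hκ, div_pow, Real.sq_sqrt hq01.le]
  -- the key algebraic identity: ∑ over pairs of c² q equals cn² / (q₀ q₁)
  have hcn2 : cn ^ 2 = 1 - (1 / (q₀ * q₁)) *
      ∑ k, (q₁ * q 0 k - q₀ * q 1 k) ^ 2 / (q 0 k + q 1 k) := by
    have hx : 0 < (1 - (1 / (q₀ * q₁)) *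
        ∑ k, (q₁ * q 0 k - q₀ * q 1 k) ^ 2 / (q 0 k + q 1 k)) :=
      Real.sqrt_pos.mp (hcn ▸ hcnpos)
    rw [hcn, Real.sq_sqrt hx.le]
  have hterm : ∀ k, (c 0 k) ^ 2 * q 0 k + (c 1 k) ^ 2 * q 1 k
      = q 0 k / q₀ ^ 2 + q 1 k / q₁ ^ 2
        - (q₁ * q 0 k - q₀ * q 1 k) ^ 2 / (q 0 k + q 1 k) / (q₀ ^ 2 * q₁ ^ 2) := by
    intro k
    have hS : (0:ℝ) < q 0 k + q 1 k := add_pos (hqpos 0 k) (hqpos 1 k)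
    rw [hc0 k, hc1 k]
    field_simp
    ring
  have hsumc : ∑ p : Fin 2 × Fin m, (c p.1 p.2) ^ 2 * q p.1 p.2
      = cn ^ 2 / (q₀ * q₁) := by
    rw [Fintype.sum_prod_type, Fin.sum_univ_two, ← Finset.sum_add_distrib]
    rw [Finset.sum_congr rfl (fun k _ => hterm k)]
    have expand : ∑ k, (q 0 k / q₀ ^ 2 + q 1 k / q₁ ^ 2
        - (q₁ * q 0 k - q₀ * q 1 k) ^ 2 / (q 0 k + q 1 k) / (q₀ ^ 2 * q₁ ^ 2))
        = (∑ k, q 0 k) / q₀ ^ 2 + (∑ k, q 1 k) / q₁ ^ 2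
          - (∑ k, (q₁ * q 0 k - q₀ * q 1 k) ^ 2 / (q 0 k + q 1 k)) / (q₀ ^ 2 * q₁ ^ 2) := by
      rw [Finset.sum_sub_distrib, Finset.sum_add_distrib, ← Finset.sum_div, ← Finset.sum_div,
        ← Finset.sum_div]
    rw [expand, hs0, hs1, hcn2]
    set T : ℝ := ∑ k, (q₁ * q 0 k - q₀ * q 1 k) ^ 2 / (q 0 k + q 1 k) with hT
    field_simp
    linear_combination q₀ * q₁ * hq
  -- expand the product of the two sums
  have hprod : ∀ ω, Bt u ω * Bt v ω = κ ^ 2 *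
      ∑ p : Fin 2 × Fin m, ∑ r : Fin 2 × Fin m,
        (c p.1 p.2 * c r.1 r.2) * (D p.1 p.2 u ω * D r.1 r.2 v ω) := by
    intro ω
    rw [hBt' u ω, hBt' v ω]
    rw [mul_mul_mul_comm, ← sq, Finset.sum_mul_sum]
    congr 1
    refine Finset.sum_congr rfl fun p _ => Finset.sum_congr rfl fun r _ => ?_
    ring
  simp_rw [hprod]
  rw [integral_const_mul]
  have hIntInner : ∀ p : Fin 2 × Fin m, Integrable
      (fun ω => ∑ r : Fin 2 × Fin m,
        (c p.1 p.2 * c r.1 r.2) * (D p.1 p.2 u ω * D r.1 r.2 v ω)) μ := by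
    intro p
    exact integrable_finset_sum _ fun r _ => (hIntMul p.1 p.2 r.1 r.2).const_mul _
  rw [integral_finset_sum _ (fun p _ => hIntInner p)]
  have hinner : ∀ p : Fin 2 × Fin m,
      ∫ ω, (∑ r : Fin 2 × Fin m,
        (c p.1 p.2 * c r.1 r.2) * (D p.1 p.2 u ω * D r.1 r.2 v ω)) ∂μ
      = (c p.1 p.2) ^ 2 * q p.1 p.2 * (min u v - u * v) := by
    intro p
    rw [integral_finset_sum _ (fun r _ => (hIntMul p.1 p.2 r.1 r.2).const_mul _)]
    have hvals : ∀ r : Fin 2 × Fin m,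
        ∫ ω, (c p.1 p.2 * c r.1 r.2) * (D p.1 p.2 u ω * D r.1 r.2 v ω) ∂μ
        = if r = p then (c p.1 p.2) ^ 2 * q p.1 p.2 * (min u v - u * v) else 0 := by
      intro r
      rw [integral_const_mul]
      by_cases h : r = p
      · subst h
        rw [if_pos rfl, hcov r.1 r.2 u hu v hv]
        ring
      · rw [if_neg h, huncorr p.1 p.2 r.1 r.2 (fun hE => h
          (Prod.ext (congrArg Prod.fst hE).symm (congrArg Prod.snd hE).symm)) u hu v hv,
          mul_zero]
    rw [Finset.sum_congr rfl (fun r _ => hvals r), Finset.sum_ite_eq' _ p _,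
      if_pos (Finset.mem_univ p)]
  rw [Finset.sum_congr rfl (fun p _ => hinner p), ← Finset.sum_mul, hsumc, hκ2]
  have hcnne : cn ≠ 0 := ne_of_gt hcnpos
  field_simp
end
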